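/- Let E be an arbitrary (countable) graph, K a field, and u ∈ E^0 an infinite emitter with s^{-1}(u) = {f_i}_{i ∈ ℕ}. Then the sum Σ_{i=1}^{∞} L_K(E)f_i f_i^* is a direct sum of left ideals that is properly contained in L_K(E)u; in particular, L_K(E)u is not a minimal left ideal. -/

import Mathlib

set_option synthInstance.maxHeartbeats 1000000
set_option maxHeartbeats 1000000

noncomputable section

/-! ## Generators and relations for the Leavitt path algebra of a graph

A (directed) graph is given by types `V` (vertices, `E^0`) and `Ed` (edges, `E^1`),
both countable, together with source and range maps `s r : Ed → V`. -/

/-- Generators for the Leavitt path algebra: vertices, real edges and ghost edges. -/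
inductive LPAGen (V Ed : Type) : Type where
  | vert : V → LPAGen V Ed
  | edge : Ed → LPAGen V Ed
  | ghost : Ed → LPAGen V Ed

open Classical in
/-- The defining relations of the Leavitt path algebra: the vertices are pairwise
orthogonal idempotents, (1) `s(e)e = e = e r(e)`, (2) `r(e)e* = e* = e* s(e)`,
(3) `e* e' = δ_{e,e'} r(e)`, and (4) `v = ∑_{s(e) = v} e e*` for every regular vertex `v`. -/
inductive LPARel (K : Type) [Field K] {V Ed : Type} (s r : Ed → V) :
    FreeAlgebra K (LPAGen V Ed) → FreeAlgebra K (LPAGen V Ed) → Prop where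
  | vert_mul (u v : V) : LPARel K s r
      (FreeAlgebra.ι K (LPAGen.vert u) * FreeAlgebra.ι K (LPAGen.vert v))
      (if u = v then FreeAlgebra.ι K (LPAGen.vert u) else 0)
  | src_mul_edge (e : Ed) : LPARel K s r
      (FreeAlgebra.ι K (LPAGen.vert (s e)) * FreeAlgebra.ι K (LPAGen.edge e))
      (FreeAlgebra.ι K (LPAGen.edge e))
  | edge_mul_rng (e : Ed) : LPARel K s r
      (FreeAlgebra.ι K (LPAGen.edge e) * FreeAlgebra.ι K (LPAGen.vert (r e)))
      (FreeAlgebra.ι K (LPAGen.edge e))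
  | rng_mul_ghost (e : Ed) : LPARel K s r
      (FreeAlgebra.ι K (LPAGen.vert (r e)) * FreeAlgebra.ι K (LPAGen.ghost e))
      (FreeAlgebra.ι K (LPAGen.ghost e))
  | ghost_mul_src (e : Ed) : LPARel K s r
      (FreeAlgebra.ι K (LPAGen.ghost e) * FreeAlgebra.ι K (LPAGen.vert (s e)))
      (FreeAlgebra.ι K (LPAGen.ghost e))
  | ghost_mul_edge (e f : Ed) : LPARel K s r
      (FreeAlgebra.ι K (LPAGen.ghost e) * FreeAlgebra.ι K (LPAGen.edge f))
      (if e = f then FreeAlgebra.ι K (LPAGen.vert (r e)) else 0)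
  | ck2 (v : V) (h : {e : Ed | s e = v}.Finite) (hne : {e : Ed | s e = v}.Nonempty) :
      LPARel K s r
        (∑ e ∈ h.toFinset,
          FreeAlgebra.ι K (LPAGen.edge e) * FreeAlgebra.ι K (LPAGen.ghost e))
        (FreeAlgebra.ι K (LPAGen.vert v))

variable (K : Type) [Field K] {V Ed : Type} (s r : Ed → V)

/-- The ambient unital algebra: quotient of the free associative algebra on the
generators by the ideal induced by the Leavitt path algebra relations. -/
abbrev LPAamb : Type := RingQuot (LPARel K s r)

/-- The canonical image of a generator in the ambient algebra. -/
def lpaGen (g : LPAGen V Ed) : LPAamb K s r :=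
  RingQuot.mkAlgHom K (LPARel K s r) (FreeAlgebra.ι K g)

/-- The Leavitt path algebra `L_K(E)` of the graph `E = (V, Ed, s, r)`: the (in general
non-unital) subalgebra of the ambient quotient algebra generated by the vertices,
edges and ghost edges. -/
def LeavittPathAlgebra : NonUnitalSubalgebra K (LPAamb K s r) :=
  NonUnitalAlgebra.adjoin K (Set.range (lpaGen K s r))

namespace LPA

/-- A vertex, as an element of the Leavitt path algebra. -/
def vertex (v : V) : LeavittPathAlgebra K s r :=
  ⟨lpaGen K s r (LPAGen.vert v), NonUnitalAlgebra.subset_adjoin K ⟨_, rfl⟩⟩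

/-- A (real) edge, as an element of the Leavitt path algebra. -/
def edge (e : Ed) : LeavittPathAlgebra K s r :=
  ⟨lpaGen K s r (LPAGen.edge e), NonUnitalAlgebra.subset_adjoin K ⟨_, rfl⟩⟩

/-- A ghost edge `e*`, as an element of the Leavitt path algebra. -/
def ghost (e : Ed) : LeavittPathAlgebra K s r :=
  ⟨lpaGen K s r (LPAGen.ghost e), NonUnitalAlgebra.subset_adjoin K ⟨_, rfl⟩⟩

/-- The set of elements of the Leavitt path algebra of the form `v`, `e` or `e*`
(i.e. the set `E^0 ∪ E^1 ∪ (E^1)^*`). -/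
def genSet : Set (LeavittPathAlgebra K s r) :=
  {x | ∃ g : LPAGen V Ed, (x : LPAamb K s r) = lpaGen K s r g}

end LPA

/-! ## Graph-theoretic notions -/

section GraphNotions

/-- `Reaches s r u w` : there is a (possibly trivial) path from `u` to `w`,
that is, `w ∈ T(u)`, the tree of `u`. -/
def Reaches (u w : V) : Prop :=
  Relation.ReflTransGen (fun a b => ∃ e : Ed, s e = a ∧ r e = b) u w

/-- A vertex `v` is a bifurcation if it emits at least two distinct edges. -/
def IsBifurcation (v : V) : Prop := ∃ e f : Ed, e ≠ f ∧ s e = v ∧ s f = v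

/-- `v` is a regular vertex: neither a sink nor an infinite emitter. -/
def IsRegularVertex (v : V) : Prop :=
  {e : Ed | s e = v}.Finite ∧ {e : Ed | s e = v}.Nonempty

/-- A nonempty list of edges is a closed path based at `v` if consecutive edges are
composable, its source is `v` and its range is `v`. -/
structure IsClosedPath (es : List Ed) (v : V) : Prop where
  ne : es ≠ []
  chain : es.Chain' fun e f => r e = s f
  src : s (es.head ne) = v
  rng : r (es.getLast ne) = v

/-- A cycle based at `v` : a closed path based at `v` whose edges have pairwise
distinct sources. -/
structure IsCycle (es : List Ed) (v : V) extends IsClosedPath s r es v : Prop where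
  nodup : (es.map s).Nodup

/-- A path (list of edges) has an exit if some edge `g` shares its source with some
edge of the path but is distinct from it. -/
def HasExit (es : List Ed) : Prop := ∃ g : Ed, ∃ e ∈ es, s g = s e ∧ g ≠ e

/-- Condition (L): every cycle has an exit. -/
def ConditionL : Prop := ∀ (es : List Ed) (v : V), IsCycle s r es v → HasExit s es

/-- A line point: no vertex of the tree `T(u)` is a bifurcation or the base of a cycle. -/
def IsLinePoint (u : V) : Prop :=
  ∀ w : V, Reaches s r u w →
    ¬ IsBifurcation s w ∧ ∀ es : List Ed, ¬ IsCycle s r es w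

/-- A set `H` of vertices is hereditary if it is closed under ranges of paths. -/
def IsHereditary (H : Set V) : Prop := ∀ v ∈ H, ∀ w : V, Reaches s r v w → w ∈ H

/-- A set `H` of vertices is saturated if every regular vertex all of whose emitted
edges have range in `H` belongs to `H`. -/
def IsSaturated (H : Set V) : Prop :=
  ∀ v : V, IsRegularVertex s v → (∀ e : Ed, s e = v → r e ∈ H) → v ∈ H

end GraphNotions

/-! ## Ring-theoretic notions for (possibly non-unital) rings -/

section RingNotions

variable {R : Type} [NonUnitalNonAssocRing R]

/-- A left ideal of a (possibly non-unital) ring: an additive subgroup closed under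
left multiplication by arbitrary ring elements. -/
def IsLeftIdeal (I : AddSubgroup R) : Prop := ∀ a : R, ∀ x ∈ I, a * x ∈ I

/-- A two-sided ideal of a (possibly non-unital) ring. -/
def IsTwoSidedIdealSG (I : AddSubgroup R) : Prop :=
  ∀ a : R, ∀ x ∈ I, a * x ∈ I ∧ x * a ∈ I

/-- A minimal left ideal: a nonzero left ideal properly containing no nonzero
left ideal. -/
def IsMinimalLeftIdeal (I : AddSubgroup R) : Prop :=
  IsLeftIdeal I ∧ I ≠ ⊥ ∧ ∀ J : AddSubgroup R, IsLeftIdeal J → J < I → J = ⊥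

/-- The socle of a ring: the sum of all its minimal left ideals (the zero ideal if
there are none). -/
def rsocle (R : Type) [NonUnitalNonAssocRing R] : AddSubgroup R :=
  sSup {I : AddSubgroup R | IsMinimalLeftIdeal I}

/-- The two-sided ideal generated by a subset of a ring. -/
def idealGenBy (S : Set R) : AddSubgroup R :=
  sInf {I : AddSubgroup R | S ⊆ ↑I ∧ IsTwoSidedIdealSG I}

/-- A ring is semiprime if it has no nonzero two-sided ideal with zero square. -/
def IsSemiprimeRing (R : Type) [NonUnitalNonAssocRing R] : Prop :=
  ∀ I : AddSubgroup R, IsTwoSidedIdealSG I → (∀ x ∈ I, ∀ y ∈ I, x * y = 0) → I = ⊥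

/-- An idempotent ring: `R² = R`, i.e. every element is a sum of products. -/
def IsIdempotentRing (R : Type) [NonUnitalNonAssocRing R] : Prop :=
  ∀ x : R, x ∈ AddSubgroup.closure {y : R | ∃ a b : R, y = a * b}

/-- The principal left ideal `R·a = {x * a : x ∈ R}`. -/
def principalLeft (a : R) : AddSubgroup R where
  carrier := Set.range fun x : R => x * a
  add_mem' := by rintro _ _ ⟨x, rfl⟩ ⟨y, rfl⟩; exact ⟨x + y, add_mul x y a⟩
  zero_mem' := ⟨0, zero_mul a⟩
  neg_mem' := by rintro _ ⟨x, rfl⟩; exact ⟨-x, neg_mul x a⟩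

theorem principalLeft.mul_mem {R : Type} [NonUnitalRing R] (a b : R) {x : R}
    (hx : x ∈ principalLeft a) : b * x ∈ principalLeft a := by
  obtain ⟨y, rfl⟩ := hx
  exact ⟨b * y, by simp only []; rw [mul_assoc]⟩

end RingNotions


/-!
The elements `fᵢ fᵢ*` are pairwise orthogonal idempotents with `u (fᵢ fᵢ*) = fᵢ fᵢ* = (fᵢ fᵢ*) u`,
so the left ideals `L fᵢ fᵢ*` are independent and lie in `L u`. Every element of their sum is
killed on the right by all but finitely many `fₖ fₖ*`, whereas `u fₖ fₖ* = fₖ fₖ* ≠ 0` for all `k`;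
hence `u` is not in the sum. That `f f* ≠ 0` reduces, via `f* (f f*) f = r(f)`, to vertices being
nonzero, which is seen from the action of `L_K(E)` on the `K`-space with basis the boundary paths.
-/

section PrincipalLeft

variable {R : Type} [NonUnitalRing R]

theorem isLeftIdeal_principalLeft (a : R) : IsLeftIdeal (principalLeft a) :=
  fun b _ hx => principalLeft.mul_mem a b hx

theorem isLeftIdeal_iSup {ι : Type} {I : ι → AddSubgroup R} (hI : ∀ i, IsLeftIdeal (I i)) :
    IsLeftIdeal (⨆ i, I i) := by
  intro a x hx
  refine AddSubgroup.iSup_induction I (C := fun x => a * x ∈ ⨆ i, I i) hx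
    (fun i y hy => AddSubgroup.mem_iSup_of_mem i (hI i a y hy)) ?_ fun y z hy hz => ?_
  · simp only [mul_zero, zero_mem]
  · simpa only [mul_add] using add_mem hy hz

theorem principalLeft_le_of_mem {a x : R} (hx : x ∈ principalLeft a) :
    principalLeft x ≤ principalLeft a := by
  rintro _ ⟨y, rfl⟩
  exact principalLeft.mul_mem a y hx

theorem principalLeft_le_ker_mulRight {a b : R} (h : a * b = 0) :
    principalLeft a ≤ (AddMonoidHom.mulRight b).ker := by
  rintro _ ⟨y, rfl⟩
  simp [mul_assoc, h]

theorem IsIdempotentElem.mem_principalLeft {a : R} (ha : IsIdempotentElem a) :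
    a ∈ principalLeft a :=
  ⟨a, ha⟩

theorem IsIdempotentElem.mul_eq_self_of_mem_principalLeft {a x : R} (ha : IsIdempotentElem a)
    (hx : x ∈ principalLeft a) : x * a = x := by
  obtain ⟨y, rfl⟩ := hx
  simp only [mul_assoc, ha.eq]

variable {ι : Type} {ε : ι → R}

theorem iSupIndep_principalLeft (idem : ∀ i, IsIdempotentElem (ε i))
    (ortho : Pairwise fun i j => ε i * ε j = 0) : iSupIndep fun i => principalLeft (ε i) := by
  intro i
  rw [AddSubgroup.disjoint_def]
  intro x hxi hx
  have hker : (⨆ j, ⨆ _ : j ≠ i, principalLeft (ε j)) ≤ (AddMonoidHom.mulRight (ε i)).ker :=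
    iSup₂_le fun j hji => principalLeft_le_ker_mulRight (ortho hji)
  rw [← (idem i).mul_eq_self_of_mem_principalLeft hxi]
  exact hker hx

theorem exists_finset_mul_eq_zero_of_mem_iSup_principalLeft
    (ortho : Pairwise fun i j => ε i * ε j = 0) {x : R} (hx : x ∈ ⨆ i, principalLeft (ε i)) :
    ∃ F : Finset ι, ∀ k ∉ F, x * ε k = 0 := by
  classical
  refine AddSubgroup.iSup_induction _ (C := fun x => ∃ F : Finset ι, ∀ k ∉ F, x * ε k = 0) hx
    (fun i y hy => ⟨{i}, fun k hk => ?_⟩) ⟨∅, fun k _ => zero_mul _⟩ ?_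
  · exact principalLeft_le_ker_mulRight (ortho (Ne.symm (Finset.notMem_singleton.1 hk))) hy
  · rintro y z ⟨F, hF⟩ ⟨G, hG⟩
    refine ⟨F ∪ G, fun k hk => ?_⟩
    rw [Finset.mem_union, not_or] at hk
    rw [add_mul, hF k hk.1, hG k hk.2, add_zero]

theorem not_mem_iSup_principalLeft [Infinite ι] (ortho : Pairwise fun i j => ε i * ε j = 0)
    (hε : ∀ i, ε i ≠ 0) {a : R} (ha : ∀ i, a * ε i = ε i) : a ∉ ⨆ i, principalLeft (ε i) := by
  intro hmem
  obtain ⟨F, hF⟩ := exists_finset_mul_eq_zero_of_mem_iSup_principalLeft ortho hmem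
  obtain ⟨k, hk⟩ := Infinite.exists_notMem_finset F
  exact hε k (ha k ▸ hF k hk)

theorem iSup_principalLeft_lt [Infinite ι] (ortho : Pairwise fun i j => ε i * ε j = 0)
    (hε : ∀ i, ε i ≠ 0) {a : R} (ha : IsIdempotentElem a) (hleft : ∀ i, a * ε i = ε i)
    (hright : ∀ i, ε i * a = ε i) : (⨆ i, principalLeft (ε i)) < principalLeft a :=
  SetLike.lt_iff_le_and_exists.2
    ⟨iSup_le fun i => principalLeft_le_of_mem ⟨ε i, hright i⟩, a, ha.mem_principalLeft,
      not_mem_iSup_principalLeft ortho hε hleft⟩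

theorem not_isMinimalLeftIdeal_principalLeft [Infinite ι] (idem : ∀ i, IsIdempotentElem (ε i))
    (ortho : Pairwise fun i j => ε i * ε j = 0) (hε : ∀ i, ε i ≠ 0) {a : R}
    (ha : IsIdempotentElem a) (hleft : ∀ i, a * ε i = ε i) (hright : ∀ i, ε i * a = ε i) :
    ¬ IsMinimalLeftIdeal (principalLeft a) := by
  rintro ⟨-, -, hmin⟩
  have hbot := hmin _ (isLeftIdeal_iSup fun i => isLeftIdeal_principalLeft (ε i))
    (iSup_principalLeft_lt ortho hε ha hleft hright)
  obtain ⟨i⟩ := ‹Infinite ι›.nonempty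
  have hmem : ε i ∈ ⨆ j, principalLeft (ε j) :=
    AddSubgroup.mem_iSup_of_mem (S := fun j => principalLeft (ε j)) i (idem i).mem_principalLeft
  exact hε i (by simpa [hbot] using hmem)

end PrincipalLeft

section LinearOfPartial

variable (R : Type) [Semiring R] {α β γ : Type}

def linearOfPartial (φ : α → Option β) : (α →₀ R) →ₗ[R] (β →₀ R) :=
  Finsupp.linearCombination R fun a => (φ a).elim 0 (Finsupp.single · 1)

theorem linearOfPartial_single (φ : α → Option β) (a : α) :
    linearOfPartial R φ (Finsupp.single a 1) = (φ a).elim 0 (Finsupp.single · 1) := by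
  simp [linearOfPartial]

theorem linearOfPartial_none : linearOfPartial R (fun _ : α => (none : Option β)) = 0 := by
  ext a
  simp [linearOfPartial]

theorem linearOfPartial_comp (φ : β → Option γ) (ψ : α → Option β) :
    linearOfPartial R φ ∘ₗ linearOfPartial R ψ = linearOfPartial R fun a => (ψ a).bind φ := by
  ext a : 2
  simp only [LinearMap.comp_apply, Finsupp.lsingle_apply, linearOfPartial_single]
  cases ψ a <;> simp [linearOfPartial_single]

end LinearOfPartial

/-- A boundary path of the graph: either an infinite path `e₀ e₁ …`, or a finite path ending at
a singular vertex `w`, encoded as the sequence `e₀ … eₙ₋₁ w w w …`. -/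
@[ext]
structure BoundaryPath where
  entry : ℕ → Ed ⊕ V
  range_eq_source : ∀ n, Sum.elim r id (entry n) = Sum.elim s id (entry (n + 1))
  stuck : ∀ n v, entry n = .inr v → ¬ IsRegularVertex s v ∧ entry (n + 1) = .inr v

namespace BoundaryPath

variable {s r}

def source (b : BoundaryPath s r) : V := Sum.elim s id (b.entry 0)

def tail (b : BoundaryPath s r) : BoundaryPath s r :=
  ⟨fun n => b.entry (n + 1), fun n => b.range_eq_source (n + 1), fun n => b.stuck (n + 1)⟩

def cons (e : Ed) (b : BoundaryPath s r) (h : r e = b.source) : BoundaryPath s r where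
  entry
    | 0 => .inl e
    | n + 1 => b.entry n
  range_eq_source
    | 0 => h
    | n + 1 => b.range_eq_source n
  stuck
    | 0, _, h => Sum.inl_ne_inr h |>.elim
    | n + 1, v, h => b.stuck n v h

@[simp] theorem entry_cons_zero (e : Ed) (b : BoundaryPath s r) (h : r e = b.source) :
    (b.cons e h).entry 0 = .inl e := rfl

@[simp] theorem source_cons (e : Ed) (b : BoundaryPath s r) (h : r e = b.source) :
    (b.cons e h).source = s e := rfl

@[simp] theorem tail_cons (e : Ed) (b : BoundaryPath s r) (h : r e = b.source) :
    (b.cons e h).tail = b := rfl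

theorem source_of_entry_zero {b : BoundaryPath s r} {e : Ed} (hb : b.entry 0 = .inl e) :
    b.source = s e := by
  simp [source, hb]

theorem source_tail {b : BoundaryPath s r} {e : Ed} (hb : b.entry 0 = .inl e) :
    b.tail.source = r e := by
  simpa [source, tail, hb] using (b.range_eq_source 0).symm

theorem cons_tail {b : BoundaryPath s r} {e : Ed} (hb : b.entry 0 = .inl e) :
    b.tail.cons e (source_tail hb).symm = b := by
  ext : 1
  funext n
  cases n
  exacts [hb.symm, rfl]

theorem exists_source_eq (v : V) : ∃ b : BoundaryPath s r, b.source = v := by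
  classical
  let next : V → Ed ⊕ V := fun w => if h : IsRegularVertex s w then .inl h.2.some else .inr w
  have source_next (w : V) : Sum.elim s id (next w) = w := by
    by_cases h : IsRegularVertex s w
    · simpa [next, h] using h.2.some_mem
    · simp [next, h]
  have next_eq_inr {w w' : V} (h : next w = .inr w') : w' = w ∧ ¬ IsRegularVertex s w := by
    by_cases hw : IsRegularVertex s w <;> simp_all [next]
  let step : V → V := fun w => Sum.elim r id (next w)
  refine ⟨⟨fun n => next (step^[n] v), fun n => ?_, fun n w hw => ?_⟩, source_next v⟩
  · rw [Function.iterate_succ_apply', source_next]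
  · obtain ⟨rfl, hreg⟩ := next_eq_inr hw
    refine ⟨hreg, ?_⟩
    simp only [Function.iterate_succ_apply', step, hw, Sum.elim_inr, id]

open Classical in
def partialMap : LPAGen V Ed → BoundaryPath s r → Option (BoundaryPath s r)
  | .vert v, b => if b.source = v then some b else none
  | .edge e, b => if h : r e = b.source then some (b.cons e h) else none
  | .ghost e, b => if b.entry 0 = .inl e then some b.tail else none

variable (s r)

def genOp (g : LPAGen V Ed) : Module.End K (BoundaryPath s r →₀ K) :=
  linearOfPartial K (partialMap g)

theorem genOp_mul (g g' : LPAGen V Ed) :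
    genOp K s r g * genOp K s r g' =
      linearOfPartial K fun b => (partialMap g' b).bind (partialMap g) :=
  linearOfPartial_comp K _ _

open Classical in
theorem genOp_vert_single (v : V) (b : BoundaryPath s r) :
    genOp K s r (.vert v) (Finsupp.single b 1) =
      if b.source = v then Finsupp.single b 1 else 0 := by
  by_cases hb : b.source = v <;> simp [genOp, linearOfPartial_single, partialMap, hb]

open Classical in
theorem genOp_edge_mul_ghost_single (e : Ed) (b : BoundaryPath s r) :
    (genOp K s r (.edge e) * genOp K s r (.ghost e)) (Finsupp.single b 1) =
      if b.entry 0 = .inl e then Finsupp.single b 1 else 0 := by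
  rw [genOp_mul, linearOfPartial_single]
  by_cases hb : b.entry 0 = .inl e
  · simp [partialMap, hb, source_tail hb, cons_tail hb]
  · simp [partialMap, hb]

theorem sum_genOp_edge_mul_ghost {v : V} (hv : IsRegularVertex s v) :
    ∑ e ∈ hv.1.toFinset, genOp K s r (.edge e) * genOp K s r (.ghost e) =
      genOp K s r (.vert v) := by
  classical
  ext b : 2
  simp only [LinearMap.comp_apply, Finsupp.lsingle_apply, LinearMap.sum_apply,
    genOp_edge_mul_ghost_single, genOp_vert_single]
  obtain ⟨g, hb⟩ | ⟨w, hb⟩ : (∃ g, b.entry 0 = .inl g) ∨ ∃ w, b.entry 0 = .inr w := by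
    cases b.entry 0 <;> simp
  · simp [hb, source]
  · have hwv : w ≠ v := fun h => (b.stuck 0 w hb).1 (h ▸ hv)
    simp [hb, source, hwv]

theorem genOp_mul_eq {g g' g'' : LPAGen V Ed}
    (h : ∀ b : BoundaryPath s r, (partialMap g' b).bind (partialMap g) = partialMap g'' b) :
    genOp K s r g * genOp K s r g' = genOp K s r g'' := by
  rw [genOp_mul, genOp]
  exact congrArg _ (funext h)

theorem genOp_mul_eq_zero {g g' : LPAGen V Ed}
    (h : ∀ b : BoundaryPath s r, (partialMap g' b).bind (partialMap g) = none) :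
    genOp K s r g * genOp K s r g' = 0 := by
  rw [genOp_mul, ← linearOfPartial_none]
  exact congrArg _ (funext h)

theorem lift_genOp_eq_of_rel ⦃x y : FreeAlgebra K (LPAGen V Ed)⦄ (h : LPARel K s r x y) :
    FreeAlgebra.lift K (genOp K s r) x = FreeAlgebra.lift K (genOp K s r) y := by
  induction h with
  | vert_mul u v =>
    simp only [map_mul, FreeAlgebra.lift_ι_apply, apply_ite, map_zero]
    split_ifs with huv
    · subst huv
      exact genOp_mul_eq K s r fun b => by by_cases hb : b.source = u <;> simp [partialMap, hb]
    · exact genOp_mul_eq_zero K s r fun b => by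
        by_cases hb : b.source = v <;> simp [partialMap, hb, Ne.symm huv]
  | src_mul_edge e =>
    simp only [map_mul, FreeAlgebra.lift_ι_apply]
    exact genOp_mul_eq K s r fun b => by by_cases hb : r e = b.source <;> simp [partialMap, hb]
  | edge_mul_rng e =>
    simp only [map_mul, FreeAlgebra.lift_ι_apply]
    exact genOp_mul_eq K s r fun b => by
      by_cases hb : b.source = r e <;> simp [partialMap, hb, Ne.symm]
  | rng_mul_ghost e =>
    simp only [map_mul, FreeAlgebra.lift_ι_apply]
    exact genOp_mul_eq K s r fun b => by
      by_cases hb : b.entry 0 = .inl e <;> simp [partialMap, hb, source_tail]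
  | ghost_mul_src e =>
    simp only [map_mul, FreeAlgebra.lift_ι_apply]
    exact genOp_mul_eq K s r fun b => by
      by_cases hb : b.entry 0 = .inl e <;> simp [partialMap, hb, source_of_entry_zero]
  | ghost_mul_edge e f =>
    simp only [map_mul, FreeAlgebra.lift_ι_apply, apply_ite, map_zero]
    split_ifs with hef
    · subst hef
      exact genOp_mul_eq K s r fun b => by
        by_cases hb : r e = b.source <;> simp [partialMap, hb, Ne.symm]
    · exact genOp_mul_eq_zero K s r fun b => by
        by_cases hb : r f = b.source <;> simp [partialMap, hb, Ne.symm hef]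
  | ck2 v hfin hne =>
    simpa only [map_sum, map_mul, FreeAlgebra.lift_ι_apply] using
      sum_genOp_edge_mul_ghost K s r ⟨hfin, hne⟩

def rep : LPAamb K s r →ₐ[K] Module.End K (BoundaryPath s r →₀ K) :=
  RingQuot.liftAlgHom K ⟨FreeAlgebra.lift K (genOp K s r), lift_genOp_eq_of_rel K s r⟩

theorem rep_lpaGen (g : LPAGen V Ed) : rep K s r (lpaGen K s r g) = genOp K s r g := by
  rw [lpaGen, rep, RingQuot.liftAlgHom_mkAlgHom_apply, FreeAlgebra.lift_ι_apply]

end BoundaryPath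

namespace LPA

theorem lpaGen_mul_lpaGen_of_rel {g g' : LPAGen V Ed} {y : FreeAlgebra K (LPAGen V Ed)}
    (h : LPARel K s r (FreeAlgebra.ι K g * FreeAlgebra.ι K g') y) :
    lpaGen K s r g * lpaGen K s r g' = RingQuot.mkAlgHom K (LPARel K s r) y := by
  rw [lpaGen, lpaGen, ← map_mul, RingQuot.mkAlgHom_rel K h]

theorem isIdempotentElem_vertex (v : V) : IsIdempotentElem (vertex K s r v) :=
  Subtype.ext <| (lpaGen_mul_lpaGen_of_rel K s r (.vert_mul v v)).trans (by rw [if_pos rfl]; rfl)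

theorem vertex_source_mul_edge (e : Ed) : vertex K s r (s e) * edge K s r e = edge K s r e :=
  Subtype.ext (lpaGen_mul_lpaGen_of_rel K s r (.src_mul_edge e))

theorem vertex_range_mul_ghost (e : Ed) : vertex K s r (r e) * ghost K s r e = ghost K s r e :=
  Subtype.ext (lpaGen_mul_lpaGen_of_rel K s r (.rng_mul_ghost e))

theorem ghost_mul_vertex_source (e : Ed) : ghost K s r e * vertex K s r (s e) = ghost K s r e :=
  Subtype.ext (lpaGen_mul_lpaGen_of_rel K s r (.ghost_mul_src e))

theorem ghost_mul_edge_self (e : Ed) : ghost K s r e * edge K s r e = vertex K s r (r e) :=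
  Subtype.ext <| (lpaGen_mul_lpaGen_of_rel K s r (.ghost_mul_edge e e)).trans
    (by rw [if_pos rfl]; rfl)

theorem ghost_mul_edge_of_ne {e f : Ed} (hef : e ≠ f) : ghost K s r e * edge K s r f = 0 :=
  Subtype.ext <| (lpaGen_mul_lpaGen_of_rel K s r (.ghost_mul_edge e f)).trans
    (by rw [if_neg hef, map_zero]; rfl)

theorem vertex_ne_zero (v : V) : vertex K s r v ≠ 0 := by
  obtain ⟨b, hb⟩ := BoundaryPath.exists_source_eq (r := r) v
  have hact : BoundaryPath.rep K s r (vertex K s r v : LPAamb K s r) (.single b 1) ≠ 0 := by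
    simp [vertex, BoundaryPath.rep_lpaGen, BoundaryPath.genOp_vert_single, hb]
  exact fun h => hact (by simp [h])

theorem isIdempotentElem_edge_mul_ghost (e : Ed) :
    IsIdempotentElem (edge K s r e * ghost K s r e) := by
  rw [IsIdempotentElem, mul_assoc, ← mul_assoc (ghost K s r e), ghost_mul_edge_self,
    vertex_range_mul_ghost]

theorem edge_mul_ghost_mul_edge_mul_ghost_of_ne {e f : Ed} (hef : e ≠ f) :
    edge K s r e * ghost K s r e * (edge K s r f * ghost K s r f) = 0 := by
  rw [mul_assoc, ← mul_assoc (ghost K s r e), ghost_mul_edge_of_ne K s r hef, zero_mul, mul_zero]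

theorem edge_mul_ghost_ne_zero (e : Ed) : edge K s r e * ghost K s r e ≠ 0 := by
  intro h
  apply vertex_ne_zero K s r (r e)
  calc vertex K s r (r e) = ghost K s r e * edge K s r e * (ghost K s r e * edge K s r e) := by
        rw [ghost_mul_edge_self, (isIdempotentElem_vertex K s r _).eq]
    _ = ghost K s r e * (edge K s r e * ghost K s r e) * edge K s r e := by simp only [mul_assoc]
    _ = 0 := by rw [h, mul_zero, zero_mul]

end LPA

theorem infinite_emitter_not_minimal_general
    {V Ed : Type} (s r : Ed → V) (K : Type) [Field K]
    (u : V) (f : ℕ → Ed) (hinj : Function.Injective f)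
    (hrange : Set.range f = {e : Ed | s e = u}) :
    iSupIndep (fun i : ℕ =>
        principalLeft (LPA.edge K s r (f i) * LPA.ghost K s r (f i))) ∧
    (⨆ i : ℕ, principalLeft (LPA.edge K s r (f i) * LPA.ghost K s r (f i))) <
      principalLeft (LPA.vertex K s r u) ∧
    ¬ IsMinimalLeftIdeal (principalLeft (LPA.vertex K s r u)) := by
  set ε : ℕ → LeavittPathAlgebra K s r := fun i => LPA.edge K s r (f i) * LPA.ghost K s r (f i)
  have hsource (i : ℕ) : s (f i) = u := hrange.subset ⟨i, rfl⟩
  have idem (i : ℕ) : IsIdempotentElem (ε i) := LPA.isIdempotentElem_edge_mul_ghost K s r (f i)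
  have ortho : Pairwise fun i j => ε i * ε j = 0 :=
    fun i j hij => LPA.edge_mul_ghost_mul_edge_mul_ghost_of_ne K s r (hinj.ne hij)
  have hne (i : ℕ) : ε i ≠ 0 := LPA.edge_mul_ghost_ne_zero K s r (f i)
  have hu := LPA.isIdempotentElem_vertex K s r u
  have hleft (i : ℕ) : LPA.vertex K s r u * ε i = ε i := by
    rw [← mul_assoc, ← hsource i, LPA.vertex_source_mul_edge]
  have hright (i : ℕ) : ε i * LPA.vertex K s r u = ε i := by
    rw [mul_assoc, ← hsource i, LPA.ghost_mul_vertex_source]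
  exact ⟨iSupIndep_principalLeft (R := LeavittPathAlgebra K s r) idem ortho,
    iSup_principalLeft_lt (R := LeavittPathAlgebra K s r) ortho hne hu hleft hright,
    not_isMinimalLeftIdeal_principalLeft (R := LeavittPathAlgebra K s r) idem ortho hne hu
      hleft hright⟩

/-- Let `u` be an infinite emitter with `s⁻¹(u) = {f_i}_{i ∈ ℕ}`.  Then the left
ideals `L_K(E) f_i f_i^*` form an independent family (their sum is direct) whose sum
is properly contained in `L_K(E)u`; in particular `L_K(E)u` is not a minimal left
ideal. -/
theorem infinite_emitter_not_minimal
    {V Ed : Type} [Countable V] [Countable Ed] (s r : Ed → V) (K : Type) [Field K]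
    (u : V) (f : ℕ → Ed) (hinj : Function.Injective f)
    (hrange : Set.range f = {e : Ed | s e = u}) :
    iSupIndep (fun i : ℕ =>
        principalLeft (LPA.edge K s r (f i) * LPA.ghost K s r (f i))) ∧
    (⨆ i : ℕ, principalLeft (LPA.edge K s r (f i) * LPA.ghost K s r (f i))) <
      principalLeft (LPA.vertex K s r u) ∧
    ¬ IsMinimalLeftIdeal (principalLeft (LPA.vertex K s r u)) :=
  infinite_emitter_not_minimal_general s r K u f hinj hrange
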